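/- Let f : [0,∞) → ℝ be continuous on [0,∞) and continuously differentiable on (0,∞), and suppose that for every a > 0 and every M ∈ ℝ there exists t ∈ (0,a) with (f(t) − f(0))/t < M. Fix n ≥ 1, a nonempty subset S ⊆ {1,…,n}, r ∈ ℝⁿ, q ∈ Δⁿ with qᵢ > 0 for all i, and β > 0, and define the partial-sum objective h(p) = Σᵢ rᵢ pᵢ − β Σ_{i∈S} qᵢ f(pᵢ/qᵢ) for p ∈ Δⁿ. Then every maximizer p of h over Δⁿ satisfies pᵢ > 0 for all i ∈ S. -/

import Mathlib

/-! If a maximizer `p` had `pᵢ = 0` for some `i ∈ S`, move a small mass `ε` to `i` from a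
coordinate `j` with `pⱼ > 0`. The objective changes by
`ε (rᵢ - rⱼ) - β qᵢ (f (ε / qᵢ) - f 0) + O(ε)`, the `O(ε)` coming from the differentiability of
`f` at `pⱼ / qⱼ > 0`. Since `(f t - f 0) / t` is unbounded below as `t → 0⁺`, the middle term
beats every linear term along suitable `ε → 0⁺`, so the objective strictly increases. -/

open Finset

/-- The probability simplex Δⁿ in ℝⁿ (indexed by `Fin n`). -/
def simplex (n : ℕ) : Set (Fin n → ℝ) :=
  {p | (∀ i, 0 ≤ p i) ∧ ∑ i, p i = 1}

/-- The partial-sum objective `h(p) = Σᵢ rᵢ pᵢ − β Σ_{i∈S} qᵢ f(pᵢ/qᵢ)`, where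
the regularization term runs only over in-sample indices `S`. -/
noncomputable def pobj (n : ℕ) (S : Finset (Fin n)) (r q : Fin n → ℝ) (β : ℝ)
    (f : ℝ → ℝ) (p : Fin n → ℝ) : ℝ :=
  (∑ i, r i * p i) - β * ∑ i ∈ S, q i * f (p i / q i)

open Filter Topology Function

section Transfer

variable {ι M : Type*} [Fintype ι] [DecidableEq ι] [AddCommGroup M]

theorem sum_apply_update {α : Type*} (φ : ι → α → M) (p : ι → α) (i : ι) (a : α) :
    ∑ k, φ k (update p i a k) = ∑ k, φ k (p k) + (φ i a - φ i (p i)) := by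
  simp_rw [apply_update φ p i a, sum_update_of_mem (mem_univ i), ← add_sum_erase _ _ (mem_univ i),
    sdiff_singleton_eq_erase]
  abel

variable {G : Type*} [AddCommGroup G]

def transfer (p : ι → G) (i j : ι) (ε : G) : ι → G :=
  update (update p j (p j - ε)) i (p i + ε)

theorem sum_apply_transfer (φ : ι → G → M) (p : ι → G) {i j : ι} (hij : i ≠ j) (ε : G) :
    ∑ k, φ k (transfer p i j ε k) =
      ∑ k, φ k (p k) + (φ i (p i + ε) - φ i (p i)) + (φ j (p j - ε) - φ j (p j)) := by
  rw [transfer, sum_apply_update, update_of_ne hij, sum_apply_update]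
  abel

end Transfer

theorem transfer_mem_simplex {n : ℕ} {p : Fin n → ℝ} (hp : p ∈ simplex n) {i j : Fin n}
    (hij : i ≠ j) {ε : ℝ} (hε : 0 ≤ ε) (hεp : ε ≤ p j) : transfer p i j ε ∈ simplex n := by
  refine ⟨fun k => ?_, ?_⟩
  · simp only [transfer, update_apply]
    split_ifs
    · linarith [hp.1 i]
    · linarith
    · exact hp.1 k
  · simpa [hp.2] using sum_apply_transfer (fun _ x => x) p hij ε

theorem pobj_eq_sum (n : ℕ) (S : Finset (Fin n)) (r q : Fin n → ℝ) (β : ℝ) (f : ℝ → ℝ)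
    (p : Fin n → ℝ) :
    pobj n S r q β f p = ∑ k, (r k * p k - β * if k ∈ S then q k * f (p k / q k) else 0) := by
  rw [pobj, sum_sub_distrib, ← mul_sum, sum_ite_mem, univ_inter]

theorem pobj_transfer {n : ℕ} (S : Finset (Fin n)) (r q : Fin n → ℝ) (β : ℝ) (f : ℝ → ℝ)
    (p : Fin n → ℝ) {i j : Fin n} (hiS : i ∈ S) (hij : i ≠ j) (ε : ℝ) :
    pobj n S r q β f (transfer p i j ε) = pobj n S r q β f p + ε * (r i - r j)
      - β * q i * (f ((p i + ε) / q i) - f (p i / q i))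
      - β * (if j ∈ S then q j * (f ((p j - ε) / q j) - f (p j / q j)) else 0) := by
  rw [pobj_eq_sum, pobj_eq_sum,
    sum_apply_transfer (fun k x => r k * x - β * if k ∈ S then q k * f (x / q k) else 0) p hij,
    if_pos hiS]
  split_ifs <;> ring

theorem DifferentiableAt.exists_eventually_sub_le {f : ℝ → ℝ} {x : ℝ}
    (hf : DifferentiableAt ℝ f x) : ∃ c ≥ 0, ∀ᶠ s in 𝓝[>] 0, f (x - s) - f x ≤ c * s := by
  obtain ⟨c, hc, hbound⟩ := hf.isBigO_sub.exists_nonneg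
  have hx : Tendsto (x - ·) (𝓝[>] 0) (𝓝 x) :=
    tendsto_nhdsWithin_of_tendsto_nhds (by simpa using (continuous_sub_left x).tendsto 0)
  refine ⟨c, hc, (hx.eventually hbound.bound).and eventually_mem_nhdsWithin |>.mono ?_⟩
  rintro s ⟨hs, hs0 : 0 < s⟩
  simp only [Real.norm_eq_abs, sub_sub_cancel_left, abs_neg, _root_.abs_of_pos hs0] at hs
  exact (le_abs_self _).trans hs

theorem exists_pobj_lt_pobj_transfer {n : ℕ} {S : Finset (Fin n)} {r q : Fin n → ℝ} {β : ℝ}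
    {f : ℝ → ℝ} {p : Fin n → ℝ} {i j : Fin n}
    (hslope : ∀ M, ∃ᶠ t in 𝓝[>] 0, (f t - f 0) / t < M)
    (hdiff : DifferentiableAt ℝ f (p j / q j)) (hq_pos : ∀ k, 0 < q k) (hβ : 0 < β)
    (hiS : i ∈ S) (hij : i ≠ j) (hpi : p i = 0) (hpj : 0 < p j) :
    ∃ ε, 0 < ε ∧ ε ≤ p j ∧ pobj n S r q β f p < pobj n S r q β f (transfer p i j ε) := by
  obtain ⟨c, hc, hbound⟩ := hdiff.exists_eventually_sub_le
  have hsmall : ∀ᶠ ε in 𝓝[>] (0 : ℝ), 0 < ε ∧ ε ≤ p j :=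
    (eventually_mem_nhdsWithin (a := 0)).and ((eventually_le_nhds hpj).filter_mono nhdsWithin_le_nhds)
  obtain ⟨t, hslope_t, hbound_t, hε0, hεp⟩ := ((hslope ((r i - r j - β * c) / β)).and_eventually
    ((eventually_nhdsGT_zero_mul_left (div_pos (hq_pos i) (hq_pos j)) hbound).and
      (eventually_nhdsGT_zero_mul_left (hq_pos i) hsmall))).exists
  have ht : 0 < t := (mul_pos_iff_of_pos_left (hq_pos i)).mp hε0
  refine ⟨q i * t, hε0, hεp, ?_⟩
  rw [pobj_transfer S r q β f p hiS hij, hpi, zero_add, zero_div,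
    mul_div_cancel_left₀ _ (hq_pos i).ne']
  have hi_term : q i * ((f t - f 0) * β) < q i * ((r i - r j - β * c) * t) :=
    mul_lt_mul_of_pos_left ((div_lt_div_iff₀ ht hβ).mp hslope_t) (hq_pos i)
  have hj_term : (if j ∈ S then q j * (f ((p j - q i * t) / q j) - f (p j / q j)) else 0)
      ≤ c * (q i * t) := by
    split_ifs
    · calc q j * (f ((p j - q i * t) / q j) - f (p j / q j))
          ≤ q j * (c * (q i / q j * t)) := by
            rw [show (p j - q i * t) / q j = p j / q j - q i / q j * t by ring]
            exact mul_le_mul_of_nonneg_left hbound_t (hq_pos j).le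
        _ = c * (q i * t) := by field_simp [(hq_pos j).ne']
    · positivity
  linarith [mul_le_mul_of_nonneg_left hj_term hβ.le]

theorem stmt7_general (f : ℝ → ℝ)
    (hf_diff : ∀ t ∈ Set.Ioi (0 : ℝ), DifferentiableAt ℝ f t)
    (hratio : ∀ a > (0 : ℝ), ∀ M : ℝ, ∃ t : ℝ, 0 < t ∧ t < a ∧ (f t - f 0) / t < M)
    (n : ℕ) (S : Finset (Fin n))
    (r q : Fin n → ℝ)
    (hq_pos : ∀ i, 0 < q i)
    (β : ℝ) (hβ : 0 < β)
    (p : Fin n → ℝ) (hp : p ∈ simplex n)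
    (hmax : ∀ p' ∈ simplex n, pobj n S r q β f p' ≤ pobj n S r q β f p) :
    ∀ i ∈ S, 0 < p i := by
  intro i hiS
  by_contra! hpi
  replace hpi : p i = 0 := le_antisymm hpi (hp.1 i)
  obtain ⟨j, -, hpj⟩ : ∃ j ∈ univ, (0 : ℝ) < p j :=
    exists_lt_of_sum_lt (by simp [hp.2] : ∑ _ : Fin n, (0 : ℝ) < ∑ k, p k)
  have hij : i ≠ j := by rintro rfl; linarith
  have hslope : ∀ M, ∃ᶠ t in 𝓝[>] 0, (f t - f 0) / t < M := fun M =>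
    (nhdsGT_basis 0).frequently_iff.2 fun a ha => by
      obtain ⟨t, ht0, hta, ht⟩ := hratio a ha M
      exact ⟨t, ⟨ht0, hta⟩, ht⟩
  obtain ⟨ε, hε0, hεp, hgain⟩ := exists_pobj_lt_pobj_transfer hslope
    (hf_diff _ (div_pos hpj (hq_pos j))) hq_pos hβ hiS hij hpi hpj
  exact (hmax _ (transfer_mem_simplex hp hij hε0.le hεp)).not_gt hgain

/-- if the ratio `(f(t) − f(0))/t` is not bounded from below in any
right neighborhood of `0`, then every maximizer of the partial-sum objective `h`
over the simplex assigns strictly positive probability to all in-sample indices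
`i ∈ S`. -/
theorem stmt7 (f : ℝ → ℝ)
    (hf_cont : ContinuousOn f (Set.Ici 0))
    (hf_diff : ∀ t ∈ Set.Ioi (0 : ℝ), DifferentiableAt ℝ f t)
    (hf_deriv_cont : ContinuousOn (deriv f) (Set.Ioi 0))
    (hratio : ∀ a > (0 : ℝ), ∀ M : ℝ, ∃ t : ℝ, 0 < t ∧ t < a ∧ (f t - f 0) / t < M)
    (n : ℕ) (hn : 1 ≤ n) (S : Finset (Fin n)) (hS : S.Nonempty)
    (r q : Fin n → ℝ)
    (hq : q ∈ simplex n) (hq_pos : ∀ i, 0 < q i)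
    (β : ℝ) (hβ : 0 < β)
    (p : Fin n → ℝ) (hp : p ∈ simplex n)
    (hmax : ∀ p' ∈ simplex n, pobj n S r q β f p' ≤ pobj n S r q β f p) :
    ∀ i ∈ S, 0 < p i :=
  stmt7_general f hf_diff hratio n S r q hq_pos β hβ p hp hmax
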